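/- arXiv:1804.10732 — 4 statements merged into one kernel-verified Lean document; each statement's English description precedes it below -/
import Mathlib

section
/- Let f(θ) be defined by f(0) = 0, f(θ) = θ·cos(1/θ) + 2√θ for 0 < θ ≤ 1/2, and f(θ) = f(1 − θ) for 1/2 < θ ≤ 1. Then f(θ)/√|sin(πθ)| ≥ 1/2 for all θ ∈ (0,1) (in particular f(θ) > 0 on (0,1)). -/
open Real

noncomputable def stmt8f (θ : ℝ) : ℝ :=
  if θ = 0 then 0
  else if θ ≤ 1/2 then θ * Real.cos (1/θ) + 2 * Real.sqrt θ
  else (1 - θ) * Real.cos (1/(1 - θ)) + 2 * Real.sqrt (1 - θ)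

lemma stmt8_key (t : ℝ) (h0 : 0 < t) (h2 : t ≤ 1/2) :
    1/2 ≤ (t * Real.cos (1/t) + 2 * Real.sqrt t) / Real.sqrt |Real.sin (π * t)| := by
  have hsinpos : 0 < Real.sin (π * t) := by
    apply Real.sin_pos_of_pos_of_lt_pi
    · positivity
    · nlinarith [Real.pi_pos]
  have hD : 0 < Real.sqrt |Real.sin (π * t)| := by
    rw [abs_of_pos hsinpos]; exact Real.sqrt_pos.mpr hsinpos
  rw [le_div_iff₀ hD]
  have hst : t ≤ Real.sqrt t := by
    nlinarith [Real.sq_sqrt h0.le, Real.sqrt_nonneg t]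
  have hN : Real.sqrt t ≤ t * Real.cos (1/t) + 2 * Real.sqrt t := by
    have hc : -1 ≤ Real.cos (1/t) := Real.neg_one_le_cos _
    nlinarith
  have hDle : Real.sqrt |Real.sin (π * t)| ≤ 2 * Real.sqrt t := by
    have h1 : |Real.sin (π * t)| ≤ 4 * t := by
      rw [abs_of_pos hsinpos]
      have := Real.sin_le (by positivity : (0:ℝ) ≤ π * t)
      nlinarith [Real.pi_le_four]
    calc Real.sqrt |Real.sin (π * t)| ≤ Real.sqrt (4 * t) := Real.sqrt_le_sqrt h1
      _ = 2 * Real.sqrt t := by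
          rw [Real.sqrt_mul (by norm_num : (0:ℝ) ≤ 4)]
          rw [show (4:ℝ) = 2^2 by norm_num, Real.sqrt_sq (by norm_num : (0:ℝ) ≤ 2)]
  nlinarith

/-- For `f(0)=0`, `f(θ) = θ cos(1/θ) + 2√θ` on `(0,1/2]`, `f(θ) = f(1-θ)` on `(1/2,1]`,
one has `f(θ)/√|sin(πθ)| ≥ 1/2` for all `θ ∈ (0,1)`. -/
theorem stmt8 (θ : ℝ) (hθ : θ ∈ Set.Ioo (0:ℝ) 1) :
    1/2 ≤ stmt8f θ / Real.sqrt |Real.sin (π * θ)| := by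
  obtain ⟨h0, h1⟩ := hθ
  unfold stmt8f
  rw [if_neg h0.ne']
  by_cases h : θ ≤ 1/2
  · rw [if_pos h]
    exact stmt8_key θ h0 h
  · rw [if_neg h]
    push_neg at h
    have hsin : Real.sin (π * θ) = Real.sin (π * (1 - θ)) := by
      rw [show π * (1 - θ) = π - π * θ by ring, Real.sin_pi_sub]
    rw [hsin]
    exact stmt8_key (1 - θ) (by linarith) (by linarith)
end

section
/- Gordon's lemma (restated): Let A_k denote the k-step transfer matrices of a one-dimensional discrete Schrödinger cocycle at energy E and phase θ, and let φ be a solution of Hφ = Eφ with ‖(φ_0, φ_{−1})ᵀ‖ = 1. Suppose there is c > 0 and a sequence q_n → ∞ such that ‖(A_{q_n}²(θ) − A_{2q_n}(θ))(φ_0, φ_{−1})ᵀ‖ ≤ e^{−c q_n} and ‖(A_{q_n}^{−1}(θ) − A_{q_n}^{−1}(θ − q_n α))(φ_0, φ_{−1})ᵀ‖ ≤ e^{−c q_n}. Then max{‖(φ_{q_n}, φ_{q_n−1})ᵀ‖, ‖(φ_{−q_n}, φ_{−q_n−1})ᵀ‖, ‖(φ_{2q_n}, φ_{2q_n−1})ᵀ‖}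 ≥ 1/4 for all sufficiently large n. -/
open Matrix Real

/-- Euclidean norm of a vector in `ℝ²`. -/
noncomputable def vnorm12 (w : Fin 2 → ℝ) : ℝ := Real.sqrt (w 0 ^ 2 + w 1 ^ 2)

/-- One-step transfer matrix `A(x) = [[E - v x, -1],[1,0]]`. -/
noncomputable def tm12 (E : ℝ) (v : ℝ → ℝ) (x : ℝ) : Matrix (Fin 2) (Fin 2) ℝ :=
  !![E - v x, -1; 1, 0]

/-- `k`-step transfer matrix `A_k(x) = A(x+(k-1)α) ⋯ A(x)`. -/
noncomputable def tmk12 (E : ℝ) (v : ℝ → ℝ) (α : ℝ) : ℕ → ℝ → Matrix (Fin 2) (Fin 2) ℝ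
  | 0, _ => 1
  | k + 1, x => tm12 E v (x + k * α) * tmk12 E v α k x

/-!
Put `w = (φ₀, φ₋₁)` and `B = A_q(θ)`. Transfer matrices propagate solutions, so `B w`,
`A_{2q}(θ) w` and `A_q(θ - qα)⁻¹ w` are the three vectors of the conclusion, and the hypotheses
say that the last two are `e^{-cq}`-close to `B² w` and `B⁻¹ w`. As `det B = 1`, Cayley–Hamilton
gives `B⁻¹ = t - B` and `B² = t B - 1` with `t = tr B`, and for a unit vector `w` one of
`‖B w‖`, `‖t w - B w‖`, `‖t B w - w‖` is at least `1/2`: if the first two are below `1/2` then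
`|t| < 1`, and then `‖t B w - w‖ ≥ 1 - |t| ‖B w‖ > 1/2`. Once `e^{-cq} ≤ 1/4`, this leaves `1/4`.
-/

open Filter

lemma vnorm12_eq_norm_toLp (w : Fin 2 → ℝ) : vnorm12 w = ‖WithLp.toLp 2 w‖ := by
  simp [vnorm12, EuclideanSpace.norm_eq, Fin.sum_univ_two]

lemma vnorm12_le_vnorm12_sub_add (x y : Fin 2 → ℝ) :
    vnorm12 x ≤ vnorm12 (x - y) + vnorm12 y := by
  simp only [vnorm12_eq_norm_toLp, WithLp.toLp_sub]
  exact norm_le_norm_sub_add _ _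

lemma half_le_max_norm_of_norm_eq_one {𝕜 V : Type*} [NormedField 𝕜] [SeminormedAddCommGroup V]
    [NormedSpace 𝕜 V] {w : V} (hw : ‖w‖ = 1) (u : V) (t : 𝕜) :
    1 / 2 ≤ max (max ‖u‖ ‖t • w - u‖) ‖t • u - w‖ := by
  by_contra! h
  simp only [max_lt_iff] at h
  obtain ⟨⟨hu, htwu⟩, htuw⟩ := h
  have ht : ‖t‖ < 1 := by
    have := norm_le_norm_sub_add (t • w) u
    rw [norm_smul, hw, mul_one] at this
    linarith
  have := norm_le_norm_sub_add w (t • u)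
  rw [hw, norm_sub_rev, norm_smul] at this
  nlinarith [norm_nonneg t, norm_nonneg u]

section CayleyHamilton

variable {R : Type*} [CommRing R] {B : Matrix (Fin 2) (Fin 2) R}

lemma Matrix.inv_eq_trace_smul_one_sub_of_det_eq_one (hB : B.det = 1) :
    B⁻¹ = B.trace • 1 - B := by
  rw [inv_def, hB, Ring.inverse_one, one_smul, adjugate_fin_two]
  ext i j
  fin_cases i <;> fin_cases j <;> simp [trace_fin_two]

lemma Matrix.sq_eq_trace_smul_sub_one_of_det_eq_one (hB : B.det = 1) :
    B ^ 2 = B.trace • B - 1 := by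
  have h := mul_nonsing_inv B (by simp [hB])
  rw [inv_eq_trace_smul_one_sub_of_det_eq_one hB, mul_sub, mul_smul_comm, mul_one] at h
  rw [sq, ← h, sub_sub_cancel]

end CayleyHamilton

lemma half_le_max_vnorm12_of_det_eq_one {B : Matrix (Fin 2) (Fin 2) ℝ} (hB : B.det = 1)
    {w : Fin 2 → ℝ} (hw : vnorm12 w = 1) :
    1 / 2 ≤ max (max (vnorm12 (B *ᵥ w)) (vnorm12 (B⁻¹ *ᵥ w))) (vnorm12 (B ^ 2 *ᵥ w)) := by
  rw [inv_eq_trace_smul_one_sub_of_det_eq_one hB, sq_eq_trace_smul_sub_one_of_det_eq_one hB]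
  simp only [sub_mulVec, smul_mulVec, one_mulVec, vnorm12_eq_norm_toLp, WithLp.toLp_sub,
    WithLp.toLp_smul] at hw ⊢
  exact half_le_max_norm_of_norm_eq_one hw _ _

lemma quarter_le_max_vnorm12_of_approx {B : Matrix (Fin 2) (Fin 2) ℝ} (hB : B.det = 1)
    {w y z : Fin 2 → ℝ} (hw : vnorm12 w = 1) {ε : ℝ} (hε : ε ≤ 1 / 4)
    (hy : vnorm12 (B⁻¹ *ᵥ w - y) ≤ ε) (hz : vnorm12 (B ^ 2 *ᵥ w - z) ≤ ε) :
    1 / 4 ≤ max (max (vnorm12 (B *ᵥ w)) (vnorm12 y)) (vnorm12 z) := by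
  by_contra! h
  simp only [max_lt_iff] at h
  obtain ⟨⟨hBw_lt, hy_lt⟩, hz_lt⟩ := h
  have key := half_le_max_vnorm12_of_det_eq_one hB hw
  have hinv_le := vnorm12_le_vnorm12_sub_add (B⁻¹ *ᵥ w) y
  have hsq_le := vnorm12_le_vnorm12_sub_add (B ^ 2 *ᵥ w) z
  exact absurd key (not_le.2 (max_lt (max_lt (by linarith) (by linarith)) (by linarith)))

section Schrodinger

variable {E α θ : ℝ} {v : ℝ → ℝ}

lemma det_tmk12 (k : ℕ) (x : ℝ) : (tmk12 E v α k x).det = 1 := by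
  induction k with
  | zero => simp [tmk12]
  | succ k ih =>
    rw [tmk12, det_mul, ih, mul_one]
    simp [tm12, det_fin_two_of]

lemma tm12_mulVec (x a b : ℝ) : tm12 E v x *ᵥ ![a, b] = ![(E - v x) * a - b, a] := by
  ext i
  fin_cases i <;> simp [tm12, sub_eq_add_neg, mul_comm]

lemma tmk12_mulVec_of_solution {φ : ℤ → ℝ}
    (hφ : ∀ n : ℤ, φ (n + 1) + φ (n - 1) + v (θ + n * α) * φ n = E * φ n) (k : ℕ) (m : ℤ) :
    tmk12 E v α k (θ + m * α) *ᵥ ![φ m, φ (m - 1)] = ![φ (m + k), φ (m + k - 1)] := by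
  induction k with
  | zero => simp [tmk12]
  | succ k ih =>
    have hstep := hφ (m + k)
    have hx : θ + m * α + k * α = θ + ((m + k : ℤ) : ℝ) * α := by push_cast; ring
    rw [tmk12, ← mulVec_mulVec, ih, Nat.cast_succ, ← add_assoc, add_sub_cancel_right, hx,
      tm12_mulVec]
    congr 1
    linear_combination -hstep

end Schrodinger

/-- Gordon's lemma: if the transfer matrices of a discrete Schrödinger cocycle at energy
`E` have the double-almost-repetition properties along a sequence `q n → ∞`, then any
normalized solution `φ` of `Hφ = Eφ` satisfies
`max {‖(φ_{q_n}, φ_{q_n-1})‖, ‖(φ_{-q_n}, φ_{-q_n-1})‖, ‖(φ_{2q_n}, φ_{2q_n-1})‖} ≥ 1/4`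
for all sufficiently large `n`. -/
theorem stmt12 (E α θ c : ℝ) (hc : 0 < c) (v : ℝ → ℝ) (φ : ℤ → ℝ)
    (hφ : ∀ n : ℤ, φ (n + 1) + φ (n - 1) + v (θ + n * α) * φ n = E * φ n)
    (hnorm : vnorm12 ![φ 0, φ (-1)] = 1)
    (q : ℕ → ℕ) (hq : Filter.Tendsto q Filter.atTop Filter.atTop)
    (h1 : ∀ n, vnorm12 (((tmk12 E (fun x => v x) α (q n) θ) ^ 2
          - tmk12 E (fun x => v x) α (2 * q n) θ).mulVec ![φ 0, φ (-1)])
        ≤ Real.exp (-c * q n))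
    (h2 : ∀ n, vnorm12 (((tmk12 E (fun x => v x) α (q n) θ)⁻¹
          - (tmk12 E (fun x => v x) α (q n) (θ - q n * α))⁻¹).mulVec ![φ 0, φ (-1)])
        ≤ Real.exp (-c * q n)) :
    ∃ N : ℕ, ∀ n ≥ N,
      max (max (vnorm12 ![φ (q n : ℤ), φ ((q n : ℤ) - 1)])
          (vnorm12 ![φ (-(q n : ℤ)), φ (-(q n : ℤ) - 1)]))
        (vnorm12 ![φ (2 * (q n : ℤ)), φ (2 * (q n : ℤ) - 1)]) ≥ 1/4 := by
  have hsmall : ∀ᶠ n in atTop, exp (-c * q n) ≤ 1 / 4 := by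
    have hcq := (tendsto_natCast_atTop_atTop.comp hq).const_mul_atTop hc
    have hexp := tendsto_exp_neg_atTop_nhds_zero.comp hcq
    simp only [Function.comp_def, ← neg_mul] at hexp
    exact hexp.eventually_le_const (by norm_num)
  refine eventually_atTop.mp (hsmall.mono fun n hn => ?_)
  have hsol := tmk12_mulVec_of_solution hφ
  have hfwd := hsol (q n) 0
  have hfwd2 := hsol (2 * q n) 0
  have hback := hsol (q n) (-q n)
  push_cast at hfwd hfwd2 hback
  simp only [zero_mul, add_zero, zero_add, zero_sub, neg_mul, ← sub_eq_add_neg,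
    neg_add_cancel] at hfwd hfwd2 hback
  have hinv : (tmk12 E v α (q n) (θ - q n * α))⁻¹ *ᵥ ![φ 0, φ (-1)]
      = ![φ (-q n), φ (-q n - 1)] := by
    rw [← hback, mulVec_mulVec, nonsing_inv_mul _ (by simp [det_tmk12]), one_mulVec]
  have hsq_close := h1 n
  have hinv_close := h2 n
  eta_reduce at hsq_close hinv_close
  rw [sub_mulVec, hfwd2] at hsq_close
  rw [sub_mulVec, hinv] at hinv_close
  have hmain := quarter_le_max_vnorm12_of_approx (det_tmk12 _ _) hnorm hn hinv_close hsq_close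
  rwa [hfwd] at hmain
end

section
/- Let θ₁,…,θ_m ∈ 𝕋, τ₁,…,τ_m ∈ (0,1], τ_min = min τ_ℓ, and let α be irrational with denominators q_n. Suppose for a given n: ∏_{ℓ=1}^m ‖q_n(θ − θ_ℓ)‖^{τ_ℓ} > e^{q_n(δ − ε/4)}/q_{n+1}^{τ_min} for some δ > 0 and 0 < ε < δ, and suppose q_n is large enough that ‖q_n(θ−θ_ℓ)‖ ≥ 2 q_n/q_{n+1} for all ℓ and q_n^{∑τ_ℓ} ≤ e^{q_n ε/4}. If j_ℓ ∈ [0, q_n) minimizes |sin π(θ − θ_ℓ + jα)| over 0 ≤ j < q_n, then ∏_{ℓ=1}^m |sin π(θ − θ_ℓ + j_ℓ α)|^{τ_ℓ} ≥ e^{q_n(δ − ε/2)}/q_{n+1}^{τ_min}. -/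
/-!
Write `‖x‖` for the distance from `x` to the nearest integer, i.e. the norm of `x` in `ℝ / ℤ`.
Since `j < q_n` and `‖q_n α‖ ≤ 1 / q_{n+1}`, the shift by `j α` moves `q_n (θ - θ_ℓ)` by at most
`q_n / q_{n+1} ≤ ‖q_n (θ - θ_ℓ)‖ / 2` in `ℝ / ℤ`, so `q_n ‖θ - θ_ℓ + j α‖ ≥ ‖q_n (θ - θ_ℓ + j α)‖`
is at least half of `‖q_n (θ - θ_ℓ)‖`. With `|sin π y| ≥ 2 ‖y‖` every sine factor is at least
`‖q_n (θ - θ_ℓ)‖ / q_n`, and the total loss `q_n ^ (∑ τ_ℓ)` is absorbed by `e ^ (q_n ε / 4)`.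
-/

open Real

namespace GenContFract

variable {K : Type*} [Field K] [LinearOrder K] [FloorRing K]

theorem exists_int_eq_of_contsAux (v : K) :
    ∀ n, (∃ a : ℤ, ((GenContFract.of v).contsAux n).a = a) ∧
      ∃ b : ℤ, ((GenContFract.of v).contsAux n).b = b
  | 0 => ⟨⟨1, by simp [contsAux]⟩, ⟨0, by simp [contsAux]⟩⟩
  | 1 => ⟨⟨⌊v⌋, by simp [contsAux, of_h_eq_floor]⟩, ⟨1, by simp [contsAux]⟩⟩
  | n + 2 => by
    obtain ⟨⟨a, ha⟩, b, hb⟩ := exists_int_eq_of_contsAux v n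
    obtain ⟨⟨a', ha'⟩, b', hb'⟩ := exists_int_eq_of_contsAux v (n + 1)
    rcases hs : (GenContFract.of v).s.get? n with _ | gp
    · simpa [contsAux, hs] using exists_int_eq_of_contsAux v (n + 1)
    · obtain ⟨z, hz⟩ := exists_int_eq_of_partDen (partDen_eq_s_b hs)
      have h1 : gp.a = 1 := of_partNum_eq_one (partNum_eq_s_a hs)
      exact ⟨⟨z * a' + a, by simp [contsAux, hs, nextConts, nextNum, h1, hz, ha, ha']⟩,
        ⟨z * b' + b, by simp [contsAux, hs, nextConts, nextDen, h1, hz, hb, hb']⟩⟩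

theorem exists_int_eq_of_num (v : K) (n : ℕ) : ∃ a : ℤ, (GenContFract.of v).nums n = a := by
  simpa [num_eq_conts_a, nth_cont_eq_succ_nth_contAux] using
    (exists_int_eq_of_contsAux v (n + 1)).1

theorem exists_int_eq_of_den (v : K) (n : ℕ) : ∃ b : ℤ, (GenContFract.of v).dens n = b := by
  simpa [den_eq_conts_b, nth_cont_eq_succ_nth_contAux] using
    (exists_int_eq_of_contsAux v (n + 1)).2

theorem one_le_of_den [IsStrictOrderedRing K] (v : K) (n : ℕ) :
    1 ≤ (GenContFract.of v).dens n := by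
  induction n with
  | zero => simp [zeroth_den_eq_one]
  | succ k ih => exact ih.trans of_den_mono

/-- After termination the convergent is `v` itself, so `abs_sub_convs_le` holds for every `n`. -/
theorem abs_sub_convs_le' [IsStrictOrderedRing K] (v : K) (n : ℕ) :
    |v - (GenContFract.of v).convs n| ≤
      1 / ((GenContFract.of v).dens n * (GenContFract.of v).dens (n + 1)) := by
  by_cases h : (GenContFract.of v).TerminatedAt n
  · rw [← of_correctness_of_terminatedAt h, sub_self, abs_zero]
    have := one_le_of_den v n
    have := one_le_of_den v (n + 1)
    positivity
  · exact abs_sub_convs_le h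

theorem norm_coe_den_mul_le (v : ℝ) (n : ℕ) :
    ‖(((GenContFract.of v).dens n * v : ℝ) : UnitAddCircle)‖ ≤
      1 / (GenContFract.of v).dens (n + 1) := by
  set d := (GenContFract.of v).dens n with hd_def
  obtain ⟨a, ha⟩ := exists_int_eq_of_num v n
  have hd : 0 < d := zero_lt_one.trans_le (one_le_of_den v n)
  have hsub : d * v - a = d * (v - (GenContFract.of v).convs n) := by
    rw [conv_eq_num_div_den, ha, ← hd_def]
    field_simp
  calc ‖((d * v : ℝ) : UnitAddCircle)‖ ≤ |d * v - a| := by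
        rw [UnitAddCircle.norm_eq]
        exact round_le _ a
    _ ≤ d * (1 / (d * (GenContFract.of v).dens (n + 1))) := by
      rw [hsub, abs_mul, abs_of_pos hd]
      gcongr
      exact abs_sub_convs_le' v n
    _ = 1 / (GenContFract.of v).dens (n + 1) := by field_simp

end GenContFract

theorem norm_coe_intCast_mul_le (q : ℤ) (x : ℝ) :
    ‖((q * x : ℝ) : UnitAddCircle)‖ ≤ |(q : ℝ)| * ‖(x : UnitAddCircle)‖ := by
  rw [← zsmul_eq_mul, AddCircle.coe_zsmul, ← Int.norm_eq_abs]
  exact norm_zsmul_le q (x : UnitAddCircle)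

theorem norm_coe_add_natCast_mul_ge (x y : ℝ) (j : ℕ) :
    ‖(x : UnitAddCircle)‖ - j * ‖(y : UnitAddCircle)‖ ≤ ‖((x + j * y : ℝ) : UnitAddCircle)‖ := by
  rw [← nsmul_eq_mul j y, AddCircle.coe_add, AddCircle.coe_nsmul]
  exact (sub_le_sub_left norm_nsmul_le _).trans (norm_sub_le_norm_add _ _)

theorem two_mul_norm_coe_le_abs_sin_pi_mul (x : ℝ) :
    2 * ‖(x : UnitAddCircle)‖ ≤ |sin (π * x)| := by
  have hπ : |π * (x - round x)| ≤ π / 2 := by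
    rw [abs_mul, abs_of_pos pi_pos]
    nlinarith [abs_sub_round x, pi_pos]
  have hsin : |sin (π * x)| = |sin (π * (x - round x))| := by
    rw [mul_sub, mul_comm π ((round x : ℤ) : ℝ), sin_sub_int_mul_pi, abs_mul, abs_neg_one_zpow,
      one_mul]
  calc 2 * ‖(x : UnitAddCircle)‖ = 2 / π * |π * (x - round x)| := by
        rw [UnitAddCircle.norm_eq, abs_mul, abs_of_pos pi_pos]
        field_simp
    _ ≤ |sin (π * x)| := hsin ▸ mul_abs_le_abs_sin hπ

theorem norm_coe_intCast_mul_div_le_abs_sin {q : ℤ} (hq : 0 < q) {α η x : ℝ} {j : ℕ}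
    (hj : (j : ℝ) < q) (hqα : ‖((q * α : ℝ) : UnitAddCircle)‖ ≤ η)
    (hqx : 2 * q * η ≤ ‖((q * x : ℝ) : UnitAddCircle)‖) :
    ‖((q * x : ℝ) : UnitAddCircle)‖ / q ≤ |sin (π * (x + j * α))| := by
  have hq' : (0 : ℝ) < q := Int.cast_pos.2 hq
  have hdrift : j * ‖((q * α : ℝ) : UnitAddCircle)‖ ≤ q * η :=
    mul_le_mul hj.le hqα (norm_nonneg _) hq'.le
  have hshift := norm_coe_add_natCast_mul_ge (q * x) (q * α) j
  have hscale := norm_coe_intCast_mul_le q (x + j * α)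
  rw [abs_of_pos hq', mul_add, mul_left_comm] at hscale
  rw [div_le_iff₀ hq']
  nlinarith [two_mul_norm_coe_le_abs_sin_pi_mul (x + j * α)]

theorem Finset.prod_div_rpow {ι : Type*} (s : Finset ι) {a : ι → ℝ} (ha : ∀ i ∈ s, 0 ≤ a i)
    {c : ℝ} (hc : 0 < c) (τ : ι → ℝ) :
    ∏ i ∈ s, (a i / c) ^ τ i = (∏ i ∈ s, a i ^ τ i) / c ^ ∑ i ∈ s, τ i := by
  rw [rpow_sum_of_pos hc, ← prod_div_distrib]
  exact prod_congr rfl fun i hi => div_rpow (ha i hi) hc.le _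

theorem stmt15_general (α : ℝ) (m : ℕ)
    (θl : Fin m → ℝ) (τ : Fin m → ℝ) (hτ : ∀ ℓ, τ ℓ ∈ Set.Ioc (0:ℝ) 1)
    (τmin : ℝ)
    (θ δ ε : ℝ)
    (n : ℕ) (qn qn1 : ℝ)
    (hqn : qn = (GenContFract.of α).dens n) (hqn1 : qn1 = (GenContFract.of α).dens (n + 1))
    (hprod : ∏ ℓ, |qn * (θ - θl ℓ) - round (qn * (θ - θl ℓ))| ^ τ ℓ
        > Real.exp (qn * (δ - ε / 4)) / qn1 ^ τmin)
    (hlarge1 : ∀ ℓ, |qn * (θ - θl ℓ) - round (qn * (θ - θl ℓ))| ≥ 2 * qn / qn1)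
    (hlarge2 : qn ^ (∑ ℓ, τ ℓ) ≤ Real.exp (qn * ε / 4))
    (j : Fin m → ℕ) (hj : ∀ ℓ, (j ℓ : ℝ) < qn) :
    ∏ ℓ, |Real.sin (π * (θ - θl ℓ + j ℓ * α))| ^ τ ℓ
      ≥ Real.exp (qn * (δ - ε / 2)) / qn1 ^ τmin := by
  obtain ⟨q, hq⟩ := GenContFract.exists_int_eq_of_den α n
  have hq1 : 1 ≤ (q : ℝ) := hq ▸ GenContFract.one_le_of_den α n
  have hqn1_pos : 0 < qn1 := hqn1 ▸ zero_lt_one.trans_le (GenContFract.one_le_of_den α (n + 1))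
  subst hqn hqn1
  rw [hq] at hprod hlarge1 hlarge2 hj ⊢
  have hqα : ‖((q * α : ℝ) : UnitAddCircle)‖ ≤ 1 / (GenContFract.of α).dens (n + 1) :=
    hq ▸ GenContFract.norm_coe_den_mul_le α n
  have hfactor (ℓ : Fin m) : |q * (θ - θl ℓ) - round (q * (θ - θl ℓ))| / q ≤
      |sin (π * (θ - θl ℓ + j ℓ * α))| := by
    simp only [← UnitAddCircle.norm_eq] at hlarge1 ⊢
    refine norm_coe_intCast_mul_div_le_abs_sin (by exact_mod_cast hq1) (hj ℓ) hqα ?_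
    simpa only [mul_one_div] using hlarge1 ℓ
  calc exp (q * (δ - ε / 2)) / (GenContFract.of α).dens (n + 1) ^ τmin
      = exp (q * (δ - ε / 4)) / (GenContFract.of α).dens (n + 1) ^ τmin / exp (q * ε / 4) := by
        rw [div_right_comm, ← exp_sub]
        ring_nf
    _ ≤ (∏ ℓ, |q * (θ - θl ℓ) - round (q * (θ - θl ℓ))| ^ τ ℓ) / (q : ℝ) ^ ∑ ℓ, τ ℓ :=
        div_le_div₀ (by positivity) hprod.le (by positivity) hlarge2
    _ = ∏ ℓ, (|q * (θ - θl ℓ) - round (q * (θ - θl ℓ))| / q) ^ τ ℓ :=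
        (Finset.prod_div_rpow _ (fun _ _ => abs_nonneg _) (by positivity) τ).symm
    _ ≤ ∏ ℓ, |sin (π * (θ - θl ℓ + j ℓ * α))| ^ τ ℓ :=
        Finset.prod_le_prod (fun _ _ => by positivity)
          fun ℓ _ => rpow_le_rpow (by positivity) (hfactor ℓ) (hτ ℓ).1.le

/-- Lemma 3.1 of the paper: lower bound on the product of the minimal sine values. -/
theorem stmt15 (α : ℝ) (hα : Irrational α) (m : ℕ) (hm : 0 < m)
    (θl : Fin m → ℝ) (τ : Fin m → ℝ) (hτ : ∀ ℓ, τ ℓ ∈ Set.Ioc (0:ℝ) 1)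
    (τmin : ℝ) (hτmin : ∀ ℓ, τmin ≤ τ ℓ) (hτmin' : ∃ ℓ, τ ℓ = τmin)
    (θ δ ε : ℝ) (hδ : 0 < δ) (hε : 0 < ε) (hεδ : ε < δ)
    (n : ℕ) (qn qn1 : ℝ)
    (hqn : qn = (GenContFract.of α).dens n) (hqn1 : qn1 = (GenContFract.of α).dens (n + 1))
    (hprod : ∏ ℓ, |qn * (θ - θl ℓ) - round (qn * (θ - θl ℓ))| ^ τ ℓ
        > Real.exp (qn * (δ - ε / 4)) / qn1 ^ τmin)
    (hlarge1 : ∀ ℓ, |qn * (θ - θl ℓ) - round (qn * (θ - θl ℓ))| ≥ 2 * qn / qn1)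
    (hlarge2 : qn ^ (∑ ℓ, τ ℓ) ≤ Real.exp (qn * ε / 4))
    (j : Fin m → ℕ) (hj : ∀ ℓ, (j ℓ : ℝ) < qn)
    (hjmin : ∀ ℓ, ∀ i : ℕ, (i : ℝ) < qn →
      |Real.sin (π * (θ - θl ℓ + j ℓ * α))| ≤ |Real.sin (π * (θ - θl ℓ + i * α))|) :
    ∏ ℓ, |Real.sin (π * (θ - θl ℓ + j ℓ * α))| ^ τ ℓ
      ≥ Real.exp (qn * (δ - ε / 2)) / qn1 ^ τmin :=
  stmt15_general α m θl τ hτ τmin θ δ ε n qn qn1 hqn hqn1 hprod hlarge1 hlarge2 j hj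
end

section
/- One-dimensional uniform upper bound from unique ergodicity: if g : 𝕋 → ℝ is continuous with ln|g| ∈ L¹(𝕋) and α is irrational, then for every ε > 0 there exists N such that for all n ≥ N and all x ∈ 𝕋, ∏_{j=0}^{n−1} |g(x + jα)| ≤ e^{n(∫_𝕋 ln|g| dθ + ε)}. -/
/-!
Truncating `log |g|` from below at `-M` gives a continuous periodic `F` with `|g| ≤ exp F`
whose integral exceeds `∫ log |g|` by less than `ε / 2` for large `M` (monotone convergence),
so it suffices to bound the Birkhoff sums `S_n F` of the rotation uniformly by `n (∫ F + ε / 2)`.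
Since `α` is irrational, every point of the circle is `δ`-close to one of the first `M` forward
iterates of any other point; with uniform continuity, `S_n F` oscillates by at most `n ε' + O(M)`;
its average over the circle is exactly `n ∫ F`, whence the uniform bound.
-/

open Real Filter Topology MeasureTheory Function

theorem Function.Periodic.uniformContinuous {β : Type*} [UniformSpace β] {F : ℝ → β} {c : ℝ}
    (hF : Periodic F c) (hc : 0 < c) (hcont : Continuous F) : UniformContinuous F := by
  have := Fact.mk hc
  have hlift : Continuous hF.lift := continuous_coinduced_dom.mpr hcont
  exact (CompactSpace.uniformContinuous_of_continuous hlift).comp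
    (AddMonoidHom.uniformContinuous_of_continuousAt_zero (QuotientAddGroup.mk' _)
      continuous_quotient_mk'.continuousAt)

lemma exists_nat_le_ceil_abs_sub_nat_mul_sub_int_le {β : ℝ} (hβ : β ≠ 0) (t : ℝ) :
    ∃ m : ℕ, m ≤ ⌈|β|⁻¹⌉₊ ∧ ∃ k : ℤ, |t - m * β - k| ≤ |β| := by
  wlog hβpos : 0 < β generalizing β t
  · obtain ⟨m, hm, k, hk⟩ := this (neg_ne_zero.mpr hβ) (-t) (by
      linarith [hβ.lt_or_gt.resolve_right hβpos])
    refine ⟨m, by simpa using hm, -k, ?_⟩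
    rw [abs_neg] at hk
    convert hk using 1
    rw [← abs_neg]
    push_cast
    ring_nf
  rw [abs_of_pos hβpos]
  have hfract : Int.fract t / β ≤ β⁻¹ := by
    rw [div_eq_mul_inv]
    exact mul_le_of_le_one_left (inv_nonneg.mpr hβpos.le) (Int.fract_lt_one t).le
  refine ⟨⌊Int.fract t / β⌋₊, (Nat.floor_le_ceil _).trans (Nat.ceil_mono hfract), ⌊t⌋, ?_⟩
  have hlow := Nat.floor_le (div_nonneg (Int.fract_nonneg t) hβpos.le)
  have hup := Nat.lt_floor_add_one (Int.fract t / β)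
  rw [le_div_iff₀ hβpos] at hlow
  rw [div_lt_iff₀ hβpos] at hup
  rw [sub_right_comm, Int.self_sub_floor, abs_le]
  constructor <;> nlinarith

lemma Irrational.exists_forall_exists_nat_le_abs_sub_le {α : ℝ} (hα : Irrational α) {δ : ℝ}
    (hδ : 0 < δ) : ∃ M : ℕ, ∀ t : ℝ, ∃ m : ℕ, m ≤ M ∧ ∃ k : ℤ, |t - m * α - k| ≤ δ := by
  -- Dirichlet: some `r α` is within `δ` of an integer, and not on it; the multiples of
  -- `β = r α - round (r α)` then sweep the circle in steps of length at most `δ`.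
  obtain ⟨r, hr, -, hrα⟩ :=
    Real.exists_nat_abs_mul_sub_round_le α (Nat.ceil_pos.mpr (inv_pos.mpr hδ))
  set β := r * α - round (r * α)
  have hβ : β ≠ 0 := sub_ne_zero.mpr ((hα.natCast_mul hr.ne').ne_int _)
  have hβδ : |β| ≤ δ := by
    refine hrα.trans ?_
    rw [div_le_iff₀ (by positivity), ← inv_mul_le_iff₀ hδ]
    linarith [Nat.le_ceil δ⁻¹]
  refine ⟨⌈|β|⁻¹⌉₊ * r, fun t => ?_⟩
  obtain ⟨m, hm, k, hk⟩ := exists_nat_le_ceil_abs_sub_nat_mul_sub_int_le hβ t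
  refine ⟨m * r, Nat.mul_le_mul_right r hm, k - m * round (r * α),
    le_trans (le_of_eq ?_) (hk.trans hβδ)⟩
  push_cast
  simp only [β]
  ring_nf

section BirkhoffSum

variable {X E : Type*} (f : X → X)

lemma norm_birkhoffSum_le [SeminormedAddCommGroup E] {g : X → E} {C : ℝ} (hC : ∀ x, ‖g x‖ ≤ C)
    (n : ℕ) (x : X) : ‖birkhoffSum f g n x‖ ≤ n * C := by
  simpa [birkhoffSum] using norm_sum_le_of_le (Finset.range n) fun k _ => hC (f^[k] x)

lemma birkhoffSum_iterate_sub_birkhoffSum [AddCommGroup E] (g : X → E) (m n : ℕ) (x : X) :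
    birkhoffSum f g n (f^[m] x) - birkhoffSum f g n x =
      birkhoffSum f g m (f^[n] x) - birkhoffSum f g m x := by
  have h := (birkhoffSum_add f g m n x).symm.trans (add_comm m n ▸ birkhoffSum_add f g n m x)
  rw [sub_eq_sub_iff_add_eq_add, add_comm, h, add_comm]

lemma norm_birkhoffSum_iterate_sub_le [SeminormedAddCommGroup E] {g : X → E} {C : ℝ}
    (hC : ∀ x, ‖g x‖ ≤ C) (m n : ℕ) (x : X) :
    ‖birkhoffSum f g n (f^[m] x) - birkhoffSum f g n x‖ ≤ 2 * m * C := by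
  rw [birkhoffSum_iterate_sub_birkhoffSum]
  linarith [norm_sub_le (birkhoffSum f g m (f^[n] x)) (birkhoffSum f g m x),
    norm_birkhoffSum_le f hC m (f^[n] x), norm_birkhoffSum_le f hC m x]

lemma birkhoffSum_le_birkhoffSum_add_of_le {g : X → ℝ} {x y : X} {ε : ℝ}
    (h : ∀ k, g (f^[k] y) ≤ g (f^[k] x) + ε) (n : ℕ) :
    birkhoffSum f g n y ≤ birkhoffSum f g n x + n * ε := by
  simpa [birkhoffSum, Finset.sum_add_distrib] using
    Finset.sum_le_sum fun k (_ : k ∈ Finset.range n) => h k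

end BirkhoffSum

lemma Continuous.birkhoffSum {X E : Type*} [TopologicalSpace X] [TopologicalSpace E]
    [AddCommMonoid E] [ContinuousAdd E] {f : X → X} {g : X → E} (hf : Continuous f)
    (hg : Continuous g) (n : ℕ) :
    Continuous (birkhoffSum f g n) :=
  continuous_finsetSum _ fun k _ => hg.comp (hf.iterate k)

lemma Function.Periodic.intervalIntegral_birkhoffSum_add {F : ℝ → ℝ} {c : ℝ} (hF : Periodic F c)
    (hc : Continuous F) (α : ℝ) (n : ℕ) :
    ∫ x in (0 : ℝ)..c, birkhoffSum (· + α) F n x = n * ∫ x in (0 : ℝ)..c, F x := by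
  have hshift (k : ℕ) : ∫ x in (0 : ℝ)..c, F (x + k * α) = ∫ x in (0 : ℝ)..c, F x := by
    rw [intervalIntegral.integral_comp_add_right, zero_add, add_comm,
      hF.intervalIntegral_add_eq _ 0, zero_add]
  simp only [birkhoffSum, add_right_iterate_apply]
  rw [intervalIntegral.integral_finsetSum (f := fun k x => F (x + k • α)) fun k _ =>
    (hc.comp (continuous_add_const _)).intervalIntegrable 0 c]
  simp only [nsmul_eq_mul, hshift, Finset.sum_const, Finset.card_range]

section IrrationalRotation

variable {F : ℝ → ℝ} {α : ℝ}

lemma Irrational.exists_birkhoffSum_le_birkhoffSum_add (hα : Irrational α) (hper : Periodic F 1)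
    (hc : Continuous F) {ε : ℝ} (hε : 0 < ε) :
    ∃ K : ℝ, ∀ n x y, birkhoffSum (· + α) F n y ≤ birkhoffSum (· + α) F n x + n * ε + K := by
  obtain ⟨C, hC⟩ := (hper.isBounded_of_continuous one_ne_zero hc).exists_norm_le
  obtain ⟨δ, hδ, hδF⟩ :=
    Metric.uniformContinuous_iff_le.mp (hper.uniformContinuous one_pos hc) ε hε
  obtain ⟨M, hM⟩ := hα.exists_forall_exists_nat_le_abs_sub_le hδ
  refine ⟨2 * M * C, fun n x y => ?_⟩
  obtain ⟨m, hmM, k, hk⟩ := hM (y - x)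
  have hclose (j : ℕ) : F ((· + α)^[j] y) ≤ F ((· + α)^[j] ((· + α)^[m] x)) + ε := by
    have hdist : dist (y + j • α - k) (x + m • α + j • α) ≤ δ := by
      rw [Real.dist_eq, nsmul_eq_mul, nsmul_eq_mul]
      convert hk using 2
      ring
    simp only [add_right_iterate_apply]
    rw [← hper.sub_int_mul_eq (x := y + j • α) k, mul_one]
    linarith [(abs_sub_le_iff.mp (hδF hdist)).1]
  have hshift :=
    norm_birkhoffSum_iterate_sub_le (· + α) (fun x => hC _ (Set.mem_range_self x)) m n x
  have hC0 : 0 ≤ C := (norm_nonneg _).trans (hC _ (Set.mem_range_self 0))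
  have hmC : (m : ℝ) * C ≤ M * C := by gcongr
  calc birkhoffSum (· + α) F n y ≤ birkhoffSum (· + α) F n ((· + α)^[m] x) + n * ε :=
        birkhoffSum_le_birkhoffSum_add_of_le _ hclose n
    _ ≤ birkhoffSum (· + α) F n x + n * ε + 2 * M * C := by
        linarith [(abs_sub_le_iff.mp hshift).1]

theorem Irrational.exists_birkhoffSum_le (hα : Irrational α) (hper : Periodic F 1)
    (hc : Continuous F) {ε : ℝ} (hε : 0 < ε) :
    ∃ N : ℕ, ∀ n ≥ N, ∀ x, birkhoffSum (· + α) F n x ≤ n * ((∫ θ in (0 : ℝ)..1, F θ) + ε) := by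
  obtain ⟨K, hK⟩ := hα.exists_birkhoffSum_le_birkhoffSum_add hper hc (half_pos hε)
  obtain ⟨N, hN⟩ := exists_nat_ge (K / (ε / 2))
  refine ⟨N, fun n hn y => ?_⟩
  have hKn : K ≤ n * (ε / 2) := by
    rw [div_le_iff₀ (half_pos hε)] at hN
    exact hN.trans (by gcongr)
  have hmean : birkhoffSum (· + α) F n y - n * (ε / 2) - K ≤ n * ∫ θ in (0 : ℝ)..1, F θ := by
    rw [← hper.intervalIntegral_birkhoffSum_add hc α n]
    simpa using intervalIntegral.integral_mono_on (f := fun _ =>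
      birkhoffSum (· + α) F n y - n * (ε / 2) - K) (μ := volume) zero_le_one
      intervalIntegrable_const
      (((continuous_add_const α).birkhoffSum hc n).intervalIntegrable 0 1)
      fun x _ => (by linarith [hK n x y])
  linarith

end IrrationalRotation

lemma Real.log_max_exp_le (a b : ℝ) : log (max a (exp b)) ≤ max (log a) b := by
  rcases le_total a (exp b) with hab | hab
  · rw [max_eq_right hab, log_exp]
    exact le_max_right _ _
  · rw [max_eq_left hab]
    exact le_max_left _ _

lemma MeasureTheory.Integrable.tendsto_integral_max_neg_natCast {X : Type*} [MeasurableSpace X]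
    {μ : Measure X} [IsFiniteMeasure μ] {f : X → ℝ} (hf : Integrable f μ) :
    Tendsto (fun M : ℕ => ∫ x, max (f x) (-M) ∂μ) atTop (𝓝 (∫ x, f x ∂μ)) := by
  refine integral_tendsto_of_tendsto_of_antitone (fun M => hf.sup (integrable_const _)) hf
    (ae_of_all _ fun x M N hMN => max_le_max le_rfl (by simpa using hMN))
    (ae_of_all _ fun x => tendsto_const_nhds.congr' ?_)
  filter_upwards [eventually_ge_atTop ⌈-f x⌉₊] with M hM
  exact (max_eq_left (neg_le.mp ((Nat.ceil_le.mp hM)))).symm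

lemma exists_intervalIntegral_log_max_abs_exp_neg_le {g : ℝ → ℝ} (hg : Continuous g) {a b : ℝ}
    (hab : a ≤ b) (hint : IntervalIntegrable (fun θ => log |g θ|) volume a b) {ε : ℝ}
    (hε : 0 < ε) : ∃ M : ℕ,
      ∫ θ in a..b, log (max |g θ| (exp (-M))) ≤ (∫ θ in a..b, log |g θ|) + ε := by
  have hL := (intervalIntegrable_iff_integrableOn_Ioc_of_le hab).mp hint
  obtain ⟨M, hM⟩ :=
    (hL.tendsto_integral_max_neg_natCast.eventually_lt_const (lt_add_of_pos_right _ hε)).exists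
  refine ⟨M, ?_⟩
  rw [intervalIntegral.integral_of_le hab, intervalIntegral.integral_of_le hab]
  refine le_trans (integral_mono ?_ ?_ fun θ => log_max_exp_le _ _) hM.le
  · exact ((hg.abs.max continuous_const).log fun θ =>
      (lt_max_of_lt_right (exp_pos _)).ne').integrableOn_Ioc
  · exact hL.sup (integrable_const _)

/-- Uniform upper bound from unique ergodicity, 1-dimensional case: if `g` is continuous
and 1-periodic with `ln |g|` integrable on `[0,1]` and `α` is irrational, then for every
`ε > 0`, for all large `n` and all `x`,
`∏_{j=0}^{n-1} |g(x + jα)| ≤ exp (n (∫₀¹ ln|g| + ε))`. -/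
theorem stmt16 (g : ℝ → ℝ) (hgper : Function.Periodic g 1) (hgcont : Continuous g)
    (hgint : IntervalIntegrable (fun θ => Real.log |g θ|) MeasureTheory.volume 0 1)
    (α : ℝ) (hα : Irrational α) (ε : ℝ) (hε : 0 < ε) :
    ∃ N : ℕ, ∀ n ≥ N, ∀ x : ℝ,
      ∏ j ∈ Finset.range n, |g (x + j * α)|
        ≤ Real.exp (n * ((∫ θ in (0:ℝ)..1, Real.log |g θ|) + ε)) := by
  obtain ⟨M, hM⟩ := exists_intervalIntegral_log_max_abs_exp_neg_le hgcont zero_le_one hgint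
    (half_pos hε)
  set F : ℝ → ℝ := fun θ => log (max |g θ| (exp (-M)))
  have hmax_pos (θ : ℝ) : 0 < max |g θ| (exp (-M)) := lt_max_of_lt_right (exp_pos _)
  have hFper : Periodic F 1 := fun θ => by simp only [F, hgper θ]
  have hFcont : Continuous F := (hgcont.abs.max continuous_const).log fun θ => (hmax_pos θ).ne'
  obtain ⟨N, hN⟩ := hα.exists_birkhoffSum_le hFper hFcont (half_pos hε)
  refine ⟨N, fun n hn x => ?_⟩
  calc ∏ j ∈ Finset.range n, |g (x + j * α)|
      ≤ ∏ j ∈ Finset.range n, exp (F (x + j * α)) :=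
        Finset.prod_le_prod (fun j _ => abs_nonneg _) fun j _ =>
          (le_max_left _ _).trans_eq (exp_log (hmax_pos _)).symm
    _ = exp (birkhoffSum (· + α) F n x) := by
        simp [← exp_sum, birkhoffSum, nsmul_eq_mul]
    _ ≤ exp (n * ((∫ θ in (0:ℝ)..1, F θ) + ε / 2)) := exp_le_exp.mpr (hN n hn x)
    _ ≤ exp (n * ((∫ θ in (0:ℝ)..1, log |g θ|) + ε)) :=
        exp_le_exp.mpr (mul_le_mul_of_nonneg_left (by linarith) n.cast_nonneg)
end
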